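/- Assume D is lenticular (γ₁ convex and γ₂ concave on I) and ζ < (√721 − 25)/48. Then the map G : Q → ℝ², G(h,s) = (ρ₂(h,s), ρ₃(h,s) + 2ρ₁(h,s)ρ₂(h,s)) — i.e. the composition of ρ with the projection π^r(x,y,t) = (y, t+2xy) onto W along the integral curves of the right-invariant field X^r = ∂_x − 2y∂_t — is injective on Q = (0,1)×I. -/

import Mathlib

/-!
On the ruling through `p₁(s)` and `p₂(λ(s))`, the equation `Q_φ(s, λ(s)) = 0` turns `π^r ∘ ρ`
into `(h, s) ↦ (y, s + 4γ₁(s)φ₁(s) + 2h(φ₂(λ(s)) - φ₁(s))(y + γ₁(s)))` with `y = ρ₂(h, s)`.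
Suppose two points `(h, s)`, `(h', s')` with `s ≤ s'` have the same image, and write
`δ = s' - s`, `Δ = λ(s') - λ(s)`. Equal second coordinates express `δ` as a sum of products, each
containing an increment of `γ₁`, `γ₂`, `φ₁` or `φ₂`, or the weight difference `h - h'`, which the
equal first coordinates control; so `δ ≤ 8κ(3δ + Δ)` with `κ = Lip(γ)‖φ‖∞ + ‖γ‖∞Lip(φ)`. The
equation for `λ` gives `Δ - δ ≤ 4κ(δ + Δ)`. Since `4κ ≤ ζ < 1/25`, this forces `δ = 0`, and then
`h = h'` because the ruling has positive length `γ₂(λ(s)) - γ₁(s)`.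
-/

open Set

noncomputable section

/-- `Q_φ(s,λ) = λ - s + 2(γ₂(λ) - γ₁(s))(φ₂(λ) + φ₁(s))` from the paper. -/
def Qphi (γ₁ γ₂ φ₁ φ₂ : ℝ → ℝ) (s l : ℝ) : ℝ :=
  l - s + 2 * (γ₂ l - γ₁ s) * (φ₂ l + φ₁ s)

/-- The boundary curve `p(s) = (φ(s), γ(s), s + 2γ(s)φ(s))` in `ℝ³ ≅ ℍ`. -/
def heisP (γ φ : ℝ → ℝ) (s : ℝ) : ℝ × ℝ × ℝ :=
  (φ s, γ s, s + 2 * γ s * φ s)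

/-- The ruled parametrization `ρ(h,s) = (1-h)·p₁(s) + h·p₂(λ(s))`. -/
def heisRho (γ₁ γ₂ φ₁ φ₂ lam : ℝ → ℝ) (w : ℝ × ℝ) : ℝ × ℝ × ℝ :=
  (1 - w.1) • heisP γ₁ φ₁ w.2 + w.1 • heisP γ₂ φ₂ (lam w.2)

/-- The lenticular domain `D = {(y,t) : t ∈ (0,t̄), γ₁(t) < y < γ₂(t)}`. -/
def lensD (γ₁ γ₂ : ℝ → ℝ) (tb : ℝ) : Set (ℝ × ℝ) :=
  {w | w.2 ∈ Set.Ioo 0 tb ∧ γ₁ w.2 < w.1 ∧ w.1 < γ₂ w.2}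

open scoped NNReal

lemma abs_mul_le_of_abs_le {a b A B : ℝ} (ha : |a| ≤ A) (hb : |b| ≤ B) : |a * b| ≤ A * B := by
  rw [abs_mul]
  exact mul_le_mul ha hb (abs_nonneg _) ((abs_nonneg _).trans ha)

lemma LipschitzOnWith.abs_sub_le_of_le {f : ℝ → ℝ} {L : ℝ≥0} {S : Set ℝ} {x y : ℝ}
    (hf : LipschitzOnWith L f S) (hx : x ∈ S) (hy : y ∈ S) (hxy : x ≤ y) :
    |f y - f x| ≤ L * (y - x) := by
  simpa [Real.dist_eq, abs_of_nonneg (sub_nonneg.2 hxy)] using hf.dist_le_mul y hy x hx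

lemma LipschitzOnWith.abs_sub_sub_sub_le {f g : ℝ → ℝ} {L : ℝ≥0} {S : Set ℝ} {x x' y y' : ℝ}
    (hf : LipschitzOnWith L f S) (hg : LipschitzOnWith L g S) (hx : x ∈ S) (hx' : x' ∈ S)
    (hy : y ∈ S) (hy' : y' ∈ S) (hxx : x ≤ x') (hyy : y ≤ y') :
    |(g y' - f x') - (g y - f x)| ≤ L * (x' - x + (y' - y)) := by
  rw [show (g y' - f x') - (g y - f x) = (g y' - g y) - (f x' - f x) by ring]
  linarith [abs_sub (g y' - g y) (f x' - f x), hf.abs_sub_le_of_le hx hx' hxx,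
    hg.abs_sub_le_of_le hy hy' hyy]

lemma abs_convex_combination_add_left_le {a b h : ℝ} (ha : a ≤ 0) (hb : 0 ≤ b)
    (hh : h ∈ Icc (0 : ℝ) 1) : |(1 - h) * a + h * b + a| ≤ 2 * (b - a) := by
  have h₀ : 0 ≤ h * (b - a) := mul_nonneg hh.1 (by linarith)
  have h₁ : h * (b - a) ≤ b - a := mul_le_of_le_one_left (by linarith) hh.2
  exact abs_le.2 ⟨by linarith, by linarith⟩

structure BoundedLipschitzOn (f : ℝ → ℝ) (M L : ℝ≥0) (S : Set ℝ) : Prop where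
  lipschitzOnWith : LipschitzOnWith L f S
  abs_le : ∀ x ∈ S, |f x| ≤ M

lemma BoundedLipschitzOn.abs_mul_sub_mul_le {f g : ℝ → ℝ} {Mf Lf Mg Lg : ℝ≥0} {S : Set ℝ}
    {x y : ℝ} (hf : BoundedLipschitzOn f Mf Lf S) (hg : BoundedLipschitzOn g Mg Lg S)
    (hx : x ∈ S) (hy : y ∈ S) (hxy : x ≤ y) :
    |f y * g y - f x * g x| ≤ (Lf * Mg + Mf * Lg) * (y - x) := by
  have hf' := abs_mul_le_of_abs_le (hf.lipschitzOnWith.abs_sub_le_of_le hx hy hxy) (hg.abs_le x hx)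
  have hg' := abs_mul_le_of_abs_le (hf.abs_le y hy) (hg.lipschitzOnWith.abs_sub_le_of_le hx hy hxy)
  calc |f y * g y - f x * g x| = |(f y - f x) * g x + f y * (g y - g x)| := by
        congr 1; ring
    _ ≤ |(f y - f x) * g x| + |f y * (g y - g x)| := abs_add_le _ _
    _ ≤ (Lf * Mg + Mf * Lg) * (y - x) := by linarith

/-- The projection `π^r(x, y, t) = (y, t + 2xy)` onto `W` along the integral curves of `X^r`. -/
def rightProj (p : ℝ × ℝ × ℝ) : ℝ × ℝ :=
  (p.2.1, p.2.2 + 2 * p.1 * p.2.1)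

/-- `π^r ∘ ρ` at `(h, s)` in closed form, valid when `Q_φ(s, l) = 0`, i.e. `l = λ(s)`. -/
def rulingProj (γ₁ γ₂ φ₁ φ₂ : ℝ → ℝ) (h s l : ℝ) : ℝ × ℝ :=
  ((1 - h) * γ₁ s + h * γ₂ l,
    s + 4 * γ₁ s * φ₁ s + 2 * h * (φ₂ l - φ₁ s) * ((1 - h) * γ₁ s + h * γ₂ l + γ₁ s))

section

variable {γ₁ γ₂ φ₁ φ₂ : ℝ → ℝ}

lemma rightProj_heisRho {lam : ℝ → ℝ} {h s : ℝ} (hQ : Qphi γ₁ γ₂ φ₁ φ₂ s (lam s) = 0) :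
    rightProj (heisRho γ₁ γ₂ φ₁ φ₂ lam (h, s)) = rulingProj γ₁ γ₂ φ₁ φ₂ h s (lam s) := by
  unfold Qphi at hQ
  simp only [rightProj, heisRho, heisP, rulingProj, Prod.smul_mk, smul_eq_mul, Prod.mk_add_mk,
    Prod.mk.injEq, true_and]
  linear_combination h * hQ

variable {S : Set ℝ} {Mγ Lγ Mφ Lφ : ℝ≥0} {h h' s s' l l' : ℝ}

lemma abs_sub_mul_le_of_rulingProj_fst_eq (hγ₁ : LipschitzOnWith Lγ γ₁ S)
    (hγ₂ : LipschitzOnWith Lγ γ₂ S) (hs : s ∈ S) (hs' : s' ∈ S) (hl : l ∈ S) (hl' : l' ∈ S)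
    (hss : s ≤ s') (hll : l ≤ l') (hh' : h' ∈ Icc (0 : ℝ) 1)
    (hy : (1 - h) * γ₁ s + h * γ₂ l = (1 - h') * γ₁ s' + h' * γ₂ l') :
    |(h - h') * (γ₂ l - γ₁ s)| ≤ Lγ * (2 * (s' - s) + (l' - l)) := by
  have hsplit : (h - h') * (γ₂ l - γ₁ s)
      = (γ₁ s' - γ₁ s) + h' * ((γ₂ l' - γ₁ s') - (γ₂ l - γ₁ s)) := by
    linear_combination hy
  have hrest := abs_mul_le_of_abs_le (abs_le.2 ⟨by linarith [hh'.1], hh'.2⟩)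
    (hγ₁.abs_sub_sub_sub_le hγ₂ hs hs' hl hl' hss hll)
  rw [hsplit]
  linarith [abs_add_le (γ₁ s' - γ₁ s) (h' * ((γ₂ l' - γ₁ s') - (γ₂ l - γ₁ s))),
    hγ₁.abs_sub_le_of_le hs hs' hss]

lemma sub_sub_sub_le_of_Qphi_eq_zero (hγ₁ : BoundedLipschitzOn γ₁ Mγ Lγ S)
    (hγ₂ : BoundedLipschitzOn γ₂ Mγ Lγ S) (hφ₁ : BoundedLipschitzOn φ₁ Mφ Lφ S)
    (hφ₂ : BoundedLipschitzOn φ₂ Mφ Lφ S) (hs : s ∈ S) (hs' : s' ∈ S) (hl : l ∈ S) (hl' : l' ∈ S)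
    (hss : s ≤ s') (hll : l ≤ l') (hQ : Qphi γ₁ γ₂ φ₁ φ₂ s l = 0)
    (hQ' : Qphi γ₁ γ₂ φ₁ φ₂ s' l' = 0) :
    l' - l - (s' - s) ≤ 4 * (Lγ * Mφ + Mγ * Lφ) * (s' - s + (l' - l)) := by
  unfold Qphi at hQ hQ'
  have hsplit : l' - l - (s' - s)
      = -2 * (((γ₂ l' - γ₁ s') - (γ₂ l - γ₁ s)) * (φ₂ l' + φ₁ s')
        + (γ₂ l - γ₁ s) * ((φ₂ l' - φ₂ l) + (φ₁ s' - φ₁ s))) := by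
    linear_combination hQ' - hQ
  have h₁ := abs_mul_le_of_abs_le (hγ₁.1.abs_sub_sub_sub_le hγ₂.1 hs hs' hl hl' hss hll)
    ((abs_add_le _ _).trans (add_le_add (hφ₂.abs_le _ hl') (hφ₁.abs_le _ hs')))
  have h₂ := abs_mul_le_of_abs_le
    ((abs_sub _ _).trans (add_le_add (hγ₂.abs_le _ hl) (hγ₁.abs_le _ hs)))
    ((abs_add_le _ _).trans (add_le_add (hφ₂.1.abs_sub_le_of_le hl hl' hll)
      (hφ₁.1.abs_sub_le_of_le hs hs' hss)))
  rw [hsplit]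
  linarith [neg_abs_le (((γ₂ l' - γ₁ s') - (γ₂ l - γ₁ s)) * (φ₂ l' + φ₁ s')),
    neg_abs_le ((γ₂ l - γ₁ s) * ((φ₂ l' - φ₂ l) + (φ₁ s' - φ₁ s)))]

lemma sub_le_of_rulingProj_eq (hγ₁ : BoundedLipschitzOn γ₁ Mγ Lγ S)
    (hγ₂ : BoundedLipschitzOn γ₂ Mγ Lγ S) (hφ₁ : BoundedLipschitzOn φ₁ Mφ Lφ S)
    (hφ₂ : BoundedLipschitzOn φ₂ Mφ Lφ S) (hs : s ∈ S) (hs' : s' ∈ S) (hl : l ∈ S) (hl' : l' ∈ S)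
    (hss : s ≤ s') (hll : l ≤ l') (ha : γ₁ s ≤ 0) (hb : 0 ≤ γ₂ l)
    (hh : h ∈ Icc (0 : ℝ) 1) (hh' : h' ∈ Icc (0 : ℝ) 1)
    (heq : rulingProj γ₁ γ₂ φ₁ φ₂ h s l = rulingProj γ₁ γ₂ φ₁ φ₂ h' s' l') :
    s' - s ≤ 8 * (Lγ * Mφ + Mγ * Lφ) * (3 * (s' - s) + (l' - l)) := by
  obtain ⟨hy, hT⟩ := Prod.ext_iff.1 heq
  dsimp only [rulingProj] at hy hT
  set y := (1 - h) * γ₁ s + h * γ₂ l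
  have hsplit : s' - s = 4 * (γ₁ s * φ₁ s - γ₁ s' * φ₁ s')
      - 2 * (((φ₂ l' - φ₁ s') - (φ₂ l - φ₁ s)) * (h * (y + γ₁ s)))
      + 2 * ((φ₂ l' - φ₁ s') * ((h - h') * (y + γ₁ s)))
      + 2 * ((φ₂ l' - φ₁ s') * (h' * (γ₁ s - γ₁ s'))) := by
    linear_combination -hT + 2 * h' * (φ₂ l' - φ₁ s') * hy
  have hy_w : |y + γ₁ s| ≤ 2 * (γ₂ l - γ₁ s) := abs_convex_combination_add_left_le ha hb hh
  have hw_M : γ₂ l - γ₁ s ≤ Mγ + Mγ :=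
    (le_abs_self _).trans ((abs_sub _ _).trans (add_le_add (hγ₂.abs_le _ hl) (hγ₁.abs_le _ hs)))
  have hweight : |(h - h') * (y + γ₁ s)| ≤ 2 * (Lγ * (2 * (s' - s) + (l' - l))) := by
    have hB := abs_sub_mul_le_of_rulingProj_fst_eq hγ₁.1 hγ₂.1 hs hs' hl hl' hss hll hh' hy
    rw [abs_mul] at hB ⊢
    rw [abs_of_nonneg (show 0 ≤ γ₂ l - γ₁ s by linarith)] at hB
    nlinarith [abs_nonneg (h - h')]
  have hk' : |φ₂ l' - φ₁ s'| ≤ Mφ + Mφ :=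
    (abs_sub _ _).trans (add_le_add (hφ₂.abs_le _ hl') (hφ₁.abs_le _ hs'))
  have hh'a : |h' * (γ₁ s - γ₁ s')| ≤ 1 * (Lγ * (s' - s)) :=
    abs_mul_le_of_abs_le (abs_le.2 ⟨by linarith [hh'.1], hh'.2⟩)
      (by rw [abs_sub_comm]; exact hγ₁.1.abs_sub_le_of_le hs hs' hss)
  have t₁ := hγ₁.abs_mul_sub_mul_le hφ₁ hs hs' hss
  have t₂ := abs_mul_le_of_abs_le (hφ₁.1.abs_sub_sub_sub_le hφ₂.1 hs hs' hl hl' hss hll)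
    (abs_mul_le_of_abs_le (abs_le.2 ⟨by linarith [hh.1], hh.2⟩) (hy_w.trans (mul_le_mul_of_nonneg_left hw_M zero_le_two)))
  have t₃ := abs_mul_le_of_abs_le hk' hweight
  have t₄ := abs_mul_le_of_abs_le hk' hh'a
  have hR : 0 ≤ (Mγ * Lφ : ℝ) := by positivity
  linarith [neg_abs_le (γ₁ s' * φ₁ s' - γ₁ s * φ₁ s),
    neg_abs_le (((φ₂ l' - φ₁ s') - (φ₂ l - φ₁ s)) * (h * (y + γ₁ s))),
    le_abs_self ((φ₂ l' - φ₁ s') * ((h - h') * (y + γ₁ s))),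
    le_abs_self ((φ₂ l' - φ₁ s') * (h' * (γ₁ s - γ₁ s'))),
    mul_nonneg hR (sub_nonneg.2 hss), mul_nonneg hR (sub_nonneg.2 hll)]

lemma eq_of_rulingProj_eq (hγ₁ : BoundedLipschitzOn γ₁ Mγ Lγ S)
    (hγ₂ : BoundedLipschitzOn γ₂ Mγ Lγ S) (hφ₁ : BoundedLipschitzOn φ₁ Mφ Lφ S)
    (hφ₂ : BoundedLipschitzOn φ₂ Mφ Lφ S) (hκ : 100 * (Lγ * Mφ + Mγ * Lφ : ℝ) ≤ 1)
    (hs : s ∈ S) (hs' : s' ∈ S) (hl : l ∈ S) (hl' : l' ∈ S) (hss : s ≤ s') (hll : l ≤ l')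
    (ha : γ₁ s < 0) (hb : 0 ≤ γ₂ l) (hh : h ∈ Icc (0 : ℝ) 1) (hh' : h' ∈ Icc (0 : ℝ) 1)
    (hQ : Qphi γ₁ γ₂ φ₁ φ₂ s l = 0) (hQ' : Qphi γ₁ γ₂ φ₁ φ₂ s' l' = 0)
    (heq : rulingProj γ₁ γ₂ φ₁ φ₂ h s l = rulingProj γ₁ γ₂ φ₁ φ₂ h' s' l') :
    h = h' ∧ s = s' := by
  have hΔ := sub_sub_sub_le_of_Qphi_eq_zero hγ₁ hγ₂ hφ₁ hφ₂ hs hs' hl hl' hss hll hQ hQ'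
  have hδ := sub_le_of_rulingProj_eq hγ₁ hγ₂ hφ₁ hφ₂ hs hs' hl hl' hss hll ha.le hb hh hh' heq
  obtain rfl : s = s' := by nlinarith
  obtain rfl : l = l' := by nlinarith
  have hB := abs_sub_mul_le_of_rulingProj_fst_eq hγ₁.1 hγ₂.1 hs hs hl hl le_rfl le_rfl hh'
    (congrArg Prod.fst heq)
  have hB0 : (h - h') * (γ₂ l - γ₁ s) = 0 := abs_nonpos_iff.1 (by simpa using hB)
  have hw : γ₂ l - γ₁ s ≠ 0 := by linarith
  exact ⟨sub_eq_zero.1 ((mul_eq_zero.1 hB0).resolve_right hw), rfl⟩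

end

lemma sqrt_721_sub_25_div_48_le : (Real.sqrt 721 - 25) / 48 ≤ 1 / 25 := by
  have : Real.sqrt 721 ≤ 673 / 25 := Real.sqrt_le_iff.2 ⟨by norm_num, by norm_num⟩
  linarith

theorem stmt_13_general (tb : ℝ)
    (γ₁ γ₂ φ₁ φ₂ : ℝ → ℝ) (Mγ Lγ Mφ Lφ : NNReal)
    (hγ₁lip : LipschitzOnWith Lγ γ₁ (Set.Icc 0 tb))
    (hγ₂lip : LipschitzOnWith Lγ γ₂ (Set.Icc 0 tb))
    (hγ₁bd : ∀ s ∈ Set.Icc 0 tb, |γ₁ s| ≤ (Mγ : ℝ))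
    (hγ₂bd : ∀ s ∈ Set.Icc 0 tb, |γ₂ s| ≤ (Mγ : ℝ))
    (hφ₁lip : LipschitzOnWith Lφ φ₁ (Set.Icc 0 tb))
    (hφ₂lip : LipschitzOnWith Lφ φ₂ (Set.Icc 0 tb))
    (hφ₁bd : ∀ s ∈ Set.Icc 0 tb, |φ₁ s| ≤ (Mφ : ℝ))
    (hφ₂bd : ∀ s ∈ Set.Icc 0 tb, |φ₂ s| ≤ (Mφ : ℝ))
    (hsign : ∀ t ∈ Set.Ioo 0 tb, γ₁ t < 0 ∧ 0 < γ₂ t)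
    (zeta : ℝ) (hzdef : zeta = 4 * ((Mγ : ℝ) + (Lγ : ℝ)) * ((Mφ : ℝ) + (Lφ : ℝ)))
    (hzeta : zeta < (Real.sqrt 721 - 25) / 48)
    (lam : ℝ → ℝ)
    (hlam_mono : StrictMonoOn lam (Set.Icc 0 tb))
    (hlam_sol : ∀ s ∈ Set.Icc 0 tb, Qphi γ₁ γ₂ φ₁ φ₂ s (lam s) = 0)
    (hlam0 : lam 0 = 0) (hlamt : lam tb = tb)
    :
    Set.InjOn
      (fun w : ℝ × ℝ =>
        ((heisRho γ₁ γ₂ φ₁ φ₂ lam w).2.1,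
         (heisRho γ₁ γ₂ φ₁ φ₂ lam w).2.2
           + 2 * (heisRho γ₁ γ₂ φ₁ φ₂ lam w).1 * (heisRho γ₁ γ₂ φ₁ φ₂ lam w).2.1))
      (Set.Ioo (0:ℝ) 1 ×ˢ Set.Ioo (0:ℝ) tb) := by
  have hκ : 100 * ((Lγ : ℝ) * Mφ + Mγ * Lφ) ≤ 1 := by
    have : (0 : ℝ) ≤ Mγ * Mφ + Lγ * Lφ := by positivity
    nlinarith [sqrt_721_sub_25_div_48_le]
  have hlam : MapsTo lam (Ioo 0 tb) (Ioo 0 tb) := by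
    simpa only [hlam0, hlamt] using hlam_mono.mapsTo_Ioo
  show InjOn (fun w => rightProj (heisRho γ₁ γ₂ φ₁ φ₂ lam w)) _
  rintro ⟨h, s⟩ ⟨hh, hs⟩ ⟨h', s'⟩ ⟨hh', hs'⟩ heq
  wlog hss : s ≤ s' generalizing h s h' s'
  · exact (this h' s' hh' hs' h s hh hs heq.symm (le_of_not_ge hss)).symm
  have hsI := Ioo_subset_Icc_self hs
  have hs'I := Ioo_subset_Icc_self hs'
  simp only [rightProj_heisRho (hlam_sol s hsI), rightProj_heisRho (hlam_sol s' hs'I)] at heq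
  obtain ⟨rfl, rfl⟩ := eq_of_rulingProj_eq ⟨hγ₁lip, hγ₁bd⟩ ⟨hγ₂lip, hγ₂bd⟩ ⟨hφ₁lip, hφ₁bd⟩
    ⟨hφ₂lip, hφ₂bd⟩ hκ hsI hs'I (Ioo_subset_Icc_self (hlam hs)) (Ioo_subset_Icc_self (hlam hs'))
    hss (hlam_mono.monotoneOn hsI hs'I hss) (hsign s hs).1 (hsign _ (hlam hs)).2.le
    (Ioo_subset_Icc_self hh) (Ioo_subset_Icc_self hh') (hlam_sol s hsI) (hlam_sol s' hs'I) heq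
  rfl

/-- the right projection `G = π^r ∘ ρ`,
`G(h,s) = (ρ₂, ρ₃ + 2ρ₁ρ₂)`, is injective on `Q = (0,1) × I`. -/
theorem stmt_13 (tb : ℝ) (htb : 0 < tb)
    (γ₁ γ₂ φ₁ φ₂ : ℝ → ℝ) (Mγ Lγ Mφ Lφ : NNReal)
    (hγ₁lip : LipschitzOnWith Lγ γ₁ (Set.Icc 0 tb))
    (hγ₂lip : LipschitzOnWith Lγ γ₂ (Set.Icc 0 tb))
    (hγ₁bd : ∀ s ∈ Set.Icc 0 tb, |γ₁ s| ≤ (Mγ : ℝ))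
    (hγ₂bd : ∀ s ∈ Set.Icc 0 tb, |γ₂ s| ≤ (Mγ : ℝ))
    (hφ₁lip : LipschitzOnWith Lφ φ₁ (Set.Icc 0 tb))
    (hφ₂lip : LipschitzOnWith Lφ φ₂ (Set.Icc 0 tb))
    (hφ₁bd : ∀ s ∈ Set.Icc 0 tb, |φ₁ s| ≤ (Mφ : ℝ))
    (hφ₂bd : ∀ s ∈ Set.Icc 0 tb, |φ₂ s| ≤ (Mφ : ℝ))
    (hsign : ∀ t ∈ Set.Ioo 0 tb, γ₁ t < 0 ∧ 0 < γ₂ t)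
    (hγ₁0 : γ₁ 0 = 0) (hγ₁t : γ₁ tb = 0) (hγ₂0 : γ₂ 0 = 0) (hγ₂t : γ₂ tb = 0)
    (hφ0 : φ₁ 0 = φ₂ 0) (hφt : φ₁ tb = φ₂ tb)
    (hconv : ConvexOn ℝ (Set.Icc 0 tb) γ₁)
    (hconc : ConcaveOn ℝ (Set.Icc 0 tb) γ₂)
    (zeta : ℝ) (hzdef : zeta = 4 * ((Mγ : ℝ) + (Lγ : ℝ)) * ((Mφ : ℝ) + (Lφ : ℝ)))
    (hzeta : zeta < (Real.sqrt 721 - 25) / 48)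
    (lam : ℝ → ℝ)
    (hlam_bij : Set.BijOn lam (Set.Icc 0 tb) (Set.Icc 0 tb))
    (hlam_mono : StrictMonoOn lam (Set.Icc 0 tb))
    (hlam_sol : ∀ s ∈ Set.Icc 0 tb, Qphi γ₁ γ₂ φ₁ φ₂ s (lam s) = 0)
    (hlam0 : lam 0 = 0) (hlamt : lam tb = tb)
    :
    Set.InjOn
      (fun w : ℝ × ℝ =>
        ((heisRho γ₁ γ₂ φ₁ φ₂ lam w).2.1,
         (heisRho γ₁ γ₂ φ₁ φ₂ lam w).2.2
           + 2 * (heisRho γ₁ γ₂ φ₁ φ₂ lam w).1 * (heisRho γ₁ γ₂ φ₁ φ₂ lam w).2.1))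
      (Set.Ioo (0:ℝ) 1 ×ˢ Set.Ioo (0:ℝ) tb) :=
  stmt_13_general tb γ₁ γ₂ φ₁ φ₂ Mγ Lγ Mφ Lφ hγ₁lip hγ₂lip hγ₁bd hγ₂bd hφ₁lip hφ₂lip hφ₁bd hφ₂bd
    hsign zeta hzdef hzeta lam hlam_mono hlam_sol hlam0 hlamt
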